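/- arXiv:2212.08891 — 4 statements merged into one kernel-verified Lean document; each statement's English description precedes it below -/
import Mathlib

section
/- Consider the zero-mode equations of the (3)-tri-junction (I): real unknowns v₁₂₃, and sequences (v_μ(n))_{n≥1}, (w_μ(n))_{n≥0} for μ = 1,2,3, satisfying Σ_μ t_μ w_μ(0) = 0, −t_μ v₁₂₃ + J_μ v_μ(1) = 0, −J_μ w_μ(n−1) + h_μ w_μ(n) = 0 and −h_μ v_μ(n) + J_μ v_μ(n+1) = 0 for n ≥ 1, with all t_μ, J_μ, h_μ > 0. If h_μ < J_μ for all μ = 1,2,3, then the space of ℓ²-solutions is exactly one-dimensional. -/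
/-- Zero-mode equations of the (3)-tri-junction (I) of three semi-infinite
transverse field Ising chains. Here `v μ n` stands for `v_μ(n+1)` and `w μ n`
for `w_μ(n)`, and `U` is `v₁₂₃(0)`; ℓ² (square-summability) is included. -/
def TriJuncSol (t J h : Fin 3 → ℝ) (U : ℝ)
    (v w : Fin 3 → ℕ → ℝ) : Prop :=
  (∑ μ : Fin 3, t μ * w μ 0 = 0) ∧
  (∀ μ, -(t μ) * U + J μ * v μ 0 = 0) ∧
  (∀ μ n, -(J μ) * w μ n + h μ * w μ (n + 1) = 0) ∧
  (∀ μ n, -(h μ) * v μ n + J μ * v μ (n + 1) = 0) ∧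
  (∀ μ, Summable (fun n => (v μ n) ^ 2)) ∧
  (∀ μ, Summable (fun n => (w μ n) ^ 2))

/-- If `h μ < J μ` for all three chains, the space of ℓ²-zero-modes of the
(3)-tri-junction (I) is exactly one-dimensional. -/
theorem stmt9 (t J h : Fin 3 → ℝ)
    (ht : ∀ μ, 0 < t μ) (hJ : ∀ μ, 0 < J μ) (hh : ∀ μ, 0 < h μ)
    (hlt : ∀ μ, h μ < J μ) :
    ∃ U v w, TriJuncSol t J h U v w ∧
      ¬(U = 0 ∧ (∀ μ n, v μ n = 0) ∧ (∀ μ n, w μ n = 0)) ∧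
      ∀ U' v' w', TriJuncSol t J h U' v' w' →
        ∃ c : ℝ, U' = c * U ∧ (∀ μ n, v' μ n = c * v μ n) ∧
          (∀ μ n, w' μ n = c * w μ n) := by
  have hJne : ∀ μ, J μ ≠ 0 := fun μ => (hJ μ).ne'
  have hhne : ∀ μ, h μ ≠ 0 := fun μ => (hh μ).ne'
  refine ⟨1, fun μ n => (t μ / J μ) * (h μ / J μ) ^ n, fun _ _ => 0, ?_, ?_, ?_⟩
  · refine ⟨by simp, ?_, by simp, ?_, ?_, fun μ => by simpa using summable_zero⟩
    · intro μ; simp only [pow_zero, mul_one]; field_simp [hJne μ]; ring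
    · intro μ n
      simp only [pow_succ]
      field_simp [hJne μ]
      ring
    · intro μ
      have hr : |(h μ / J μ) ^ 2| < 1 := by
        rw [abs_of_nonneg (sq_nonneg _)]
        have h1 : h μ / J μ < 1 := (div_lt_one (hJ μ)).2 (hlt μ)
        have h0 : 0 ≤ h μ / J μ := le_of_lt (div_pos (hh μ) (hJ μ))
        calc (h μ / J μ) ^ 2 ≤ (h μ / J μ) * 1 := by nlinarith
          _ < 1 := by nlinarith
      have := (summable_geometric_of_abs_lt_one hr).mul_left ((t μ / J μ) ^ 2)
      refine this.congr fun n => ?_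
      ring
  · intro ⟨h1, _, _⟩; exact one_ne_zero h1
  · rintro U' v' w' ⟨hs1, hs2, hs3, hs4, hs5, hs6⟩
    -- w' μ 0 = 0
    have hw0 : ∀ μ, w' μ 0 = 0 := by
      intro μ
      have hrec : ∀ n, w' μ (n + 1) = (J μ / h μ) * w' μ n := by
        intro n
        have h3 := hs3 μ n
        field_simp [hhne μ]
        linarith
      have hge : ∀ n, (w' μ 0) ^ 2 ≤ (w' μ n) ^ 2 := by
        intro n
        induction n with
        | zero => exact le_refl _
        | succ k ih =>
          rw [hrec k, mul_pow]
          have h1 : 1 ≤ (J μ / h μ) ^ 2 := by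
            have : 1 ≤ J μ / h μ := (one_le_div (hh μ)).2 (hlt μ).le
            nlinarith
          nlinarith [sq_nonneg (w' μ k)]
      have htend := (hs6 μ).tendsto_atTop_zero
      have hle := ge_of_tendsto' htend hge
      have hz : (w' μ 0) ^ 2 = 0 := le_antisymm hle (sq_nonneg _)
      exact pow_eq_zero_iff two_ne_zero |>.1 hz
    have hwall : ∀ μ n, w' μ n = 0 := by
      intro μ n
      induction n with
      | zero => exact hw0 μ
      | succ k ih =>
        have := hs3 μ k
        rw [ih] at this
        have : h μ * w' μ (k + 1) = 0 := by linarith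
        exact (mul_eq_zero.1 this).resolve_left (hhne μ)
    refine ⟨U', by ring, ?_, fun μ n => by simp [hwall μ n]⟩
    intro μ n
    induction n with
    | zero =>
      have h2 := hs2 μ
      simp only [pow_zero, mul_one]
      rw [mul_div_assoc', eq_div_iff (hJne μ)]
      linarith
    | succ k ih =>
      have h4 := hs4 μ k
      have hv : v' μ (k + 1) = (h μ / J μ) * v' μ k := by
        field_simp [hJne μ]; linarith
      rw [hv, ih]
      simp only [pow_succ]
      ring
end

section
/- Consider the zero-mode equations of the (3)-tri-junction (I) with all t_μ, J_μ, h_μ > 0. If h_μ > J_μ for all μ = 1,2,3, then the space of ℓ²-solutions is exactly two-dimensional, parameterized by (w₁(0), w₂(0), w₃(0)) in the plane t₁w₁(0) + t₂w₂(0) + t₃w₃(0) = 0 with v₁₂₃ = 0. -/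
lemma grow_zero {r : ℝ} (hr : 1 ≤ r) {v : ℕ → ℝ}
    (hrec : ∀ n, v (n + 1) = r * v n)
    (hs : Summable fun n => v n ^ 2) : ∀ n, v n = 0 := by
  have hge : ∀ n, v 0 ^ 2 ≤ v n ^ 2 := by
    intro n
    induction n with
    | zero => exact le_refl _
    | succ k ih =>
        rw [hrec k]
        nlinarith [sq_nonneg (v k), mul_nonneg (mul_nonneg (sub_nonneg.2 hr) (by linarith : (0:ℝ) ≤ r + 1)) (sq_nonneg (v k))]
  have h0 : Filter.Tendsto (fun n => v n ^ 2) Filter.atTop (nhds 0) :=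
    hs.tendsto_atTop_zero
  have : v 0 ^ 2 ≤ 0 := ge_of_tendsto' h0 hge
  have hv0 : v 0 = 0 := by nlinarith [sq_nonneg (v 0)]
  intro n
  induction n with
  | zero => exact hv0
  | succ k ih => rw [hrec k, ih, mul_zero]

/-- If `h μ > J μ` for all three chains, the space of ℓ²-zero-modes of the
(3)-tri-junction (I) is exactly two-dimensional: every solution has
`v₁₂₃ = 0`, and the solutions are parameterized bijectively by
`(w₁(0), w₂(0), w₃(0))` in the plane `∑ μ, t μ * w μ 0 = 0`. -/
theorem stmt10 (t J h : Fin 3 → ℝ)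
    (ht : ∀ μ, 0 < t μ) (hJ : ∀ μ, 0 < J μ) (hh : ∀ μ, 0 < h μ)
    (hgt : ∀ μ, J μ < h μ) :
    (∀ U v w, TriJuncSol t J h U v w → U = 0) ∧
    (∀ a : Fin 3 → ℝ, (∑ μ : Fin 3, t μ * a μ = 0) →
      ∃! s : ℝ × (Fin 3 → ℕ → ℝ) × (Fin 3 → ℕ → ℝ),
        TriJuncSol t J h s.1 s.2.1 s.2.2 ∧ ∀ μ, s.2.2 μ 0 = a μ) := by
  -- basic facts
  have hvzero : ∀ U v w, TriJuncSol t J h U v w → ∀ μ n, v μ n = 0 := by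
    intro U v w hs μ
    obtain ⟨_, _, _, hv, hvs, _⟩ := hs
    have hr : (1 : ℝ) ≤ h μ / J μ :=
      (one_le_div (hJ μ)).2 (hgt μ).le
    refine grow_zero hr (fun n => ?_) (hvs μ)
    have := hv μ n
    rw [div_mul_eq_mul_div, eq_div_iff (hJ μ).ne']
    linarith
  have hUzero : ∀ U v w, TriJuncSol t J h U v w → U = 0 := by
    intro U v w hs
    have h0 := hs.2.1
    have hv := hvzero U v w hs
    have := h0 0
    rw [hv 0 0] at this
    have ht0 := ht 0
    nlinarith
  constructor
  · exact hUzero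
  · intro a ha
    set q : Fin 3 → ℝ := fun μ => J μ / h μ with hq
    have hq0 : ∀ μ, 0 < q μ := fun μ => div_pos (hJ μ) (hh μ)
    have hq1 : ∀ μ, q μ < 1 := fun μ => (div_lt_one (hh μ)).2 (hgt μ)
    refine ⟨⟨0, fun _ _ => 0, fun μ n => a μ * q μ ^ n⟩, ⟨⟨?_, ?_, ?_, ?_, ?_, ?_⟩, ?_⟩, ?_⟩
    · simpa using ha
    · intro μ; simp
    · intro μ n
      have hhne : h μ ≠ 0 := (hh μ).ne'
      simp only [hq]
      have hc : h μ * (J μ / h μ) = J μ := by field_simp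
      linear_combination (a μ * (J μ / h μ) ^ n) * hc
    · intro μ n; simp
    · intro μ; simpa using summable_zero
    · intro μ
      have hsum : Summable fun n : ℕ => (q μ ^ 2) ^ n :=
        summable_geometric_of_lt_one (by positivity) (by nlinarith [hq0 μ, hq1 μ])
      have := hsum.mul_left (a μ ^ 2)
      refine this.congr fun n => ?_
      rw [← pow_mul, mul_comm 2 n, pow_mul]
      ring
    · intro μ; simp
    · rintro ⟨U, v, w⟩ ⟨hsol, hw0⟩
      dsimp only at hsol hw0
      have hU : U = 0 := hUzero U v w hsol
      have hv : ∀ μ n, v μ n = 0 := hvzero U v w hsol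
      have hwrec := hsol.2.2.1
      have hw : ∀ μ n, w μ n = a μ * q μ ^ n := by
        intro μ n
        induction n with
        | zero => simpa using hw0 μ
        | succ k ih =>
            have := hwrec μ k
            have hhne : h μ ≠ 0 := (hh μ).ne'
            rw [ih] at this
            have : w μ (k + 1) = J μ / h μ * (a μ * q μ ^ k) := by
              field_simp at this ⊢
              linarith
            rw [this, hq]
            ring
      refine Prod.ext hU (Prod.ext ?_ ?_) <;> funext μ n
      · exact hv μ n
      · exact hw μ n
end

section
/- Consider the zero-mode equations of the (3)-tri-junction (I) with all t_μ, J_μ, h_μ > 0. If exactly one chain satisfies h_μ > J_μ (say μ = 1, with h₂ < J₂ and h₃ < J₃), then the only ℓ²-solution is zero. -/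
lemma eq_geometric_of_recurrence {K : Type*} [Field K] {a b : K} (hb : b ≠ 0) {x : ℕ → K}
    (hx : ∀ n, -a * x n + b * x (n + 1) = 0) (n : ℕ) : x n = (a / b) ^ n * x 0 := by
  induction n with
  | zero => simp
  | succ n ih =>
    have hstep : x (n + 1) = a / b * x n := by
      field_simp
      linear_combination hx n
    rw [hstep, ih, pow_succ]
    ring

lemma eq_zero_of_summable_sq_geometric {r c : ℝ} (hr : 1 ≤ r)
    (hs : Summable fun n : ℕ => (r ^ n * c) ^ 2) : c = 0 := by
  have hbound : ∀ n : ℕ, c ^ 2 ≤ (r ^ n * c) ^ 2 := fun n => by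
    rw [mul_pow]
    exact le_mul_of_one_le_left (sq_nonneg c) (one_le_pow₀ (one_le_pow₀ hr))
  have hc : c ^ 2 ≤ 0 := ge_of_tendsto' hs.tendsto_atTop_zero hbound
  exact pow_eq_zero_iff two_ne_zero |>.mp (le_antisymm hc (sq_nonneg c))

lemma eq_zero_of_recurrence_of_summable_sq {a b : ℝ} (hb : 0 < b) (hba : b ≤ a) {x : ℕ → ℝ}
    (hx : ∀ n, -a * x n + b * x (n + 1) = 0) (hs : Summable fun n => x n ^ 2) : x 0 = 0 :=
  eq_zero_of_summable_sq_geometric ((one_le_div hb).mpr hba)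
    (hs.congr fun n => by rw [eq_geometric_of_recurrence hb.ne' hx n])

/-- If exactly one chain (say `μ = 1`) satisfies `h μ > J μ` while the other two
satisfy `h μ < J μ`, then the only ℓ²-zero-mode of the (3)-tri-junction (I)
is the zero solution. -/
theorem stmt11 (t J h : Fin 3 → ℝ)
    (ht : ∀ μ, 0 < t μ) (hJ : ∀ μ, 0 < J μ) (hh : ∀ μ, 0 < h μ)
    (h1 : J 0 < h 0) (h2 : h 1 < J 1) (h3 : h 2 < J 2) :
    ∀ U v w, TriJuncSol t J h U v w →
      U = 0 ∧ (∀ μ n, v μ n = 0) ∧ (∀ μ n, w μ n = 0) := by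
  rintro U v w ⟨hjunc, hU, hwrec, hvrec, hvs, hws⟩
  have hv₀ : v 0 0 = 0 :=
    eq_zero_of_recurrence_of_summable_sq (hJ 0) h1.le (hvrec 0) (hvs 0)
  have hU₀ : U = 0 := by simpa [hv₀, (ht 0).ne'] using hU 0
  have hv : ∀ μ, v μ 0 = 0 := fun μ => by simpa [hU₀, (hJ μ).ne'] using hU μ
  have hw₁ : w 1 0 = 0 :=
    eq_zero_of_recurrence_of_summable_sq (hh 1) h2.le (hwrec 1) (hws 1)
  have hw₂ : w 2 0 = 0 :=
    eq_zero_of_recurrence_of_summable_sq (hh 2) h3.le (hwrec 2) (hws 2)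
  have hw₀ : w 0 0 = 0 := by
    simpa [Fin.sum_univ_three, hw₁, hw₂, (ht 0).ne'] using hjunc
  have hw : ∀ μ, w μ 0 = 0 := by
    intro μ
    fin_cases μ <;> assumption
  refine ⟨hU₀, fun μ n => ?_, fun μ n => ?_⟩
  · rw [eq_geometric_of_recurrence (hJ μ).ne' (hvrec μ) n, hv μ, mul_zero]
  · rw [eq_geometric_of_recurrence (hh μ).ne' (hwrec μ) n, hw μ, mul_zero]
end

section
/- Let G be a connected finite graph with n vertices, and suppose G can be written as an edge-disjoint union of m complete graphs (cliques) S₁, ..., S_m such that any two cliques share at most one vertex and each vertex of G lies in exactly two cliques. Then the operators h_j = −i ε_j φ_{α(j)} φ_{β(j)} (where vertex j lies in cliques S_{α(j)} and S_{β(j)}, ε_j ∈ {±1}, and φ₁, ..., φ_m are pairwise anticommuting Hermitian involutions) satisfy: h_j and h_k anticommute if j and k are adjacent in G, and commute otherwise. -/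
/-!
If the `φ α` pairwise anticommute, then `φ a` commutes with `φ c * φ d` when `a ∉ {c, d}` and
anticommutes with it when `a ∈ {c, d}`, `c ≠ d`. Hence `h j * h k = ± h k * h j` with sign
`(-1) ^ #({A j, B j} ∩ {A k, B k})`. Two cliques meet in at most one vertex, so distinct vertices
share at most one clique: the intersection has one element when `j` and `k` are adjacent and
none otherwise.
-/

def AntiCommute {R : Type*} [Mul R] [Neg R] (x y : R) : Prop := x * y = -(y * x)

section AntiCommute

variable {R : Type*} [Semigroup R] [HasDistribNeg R] {x y z : R}

theorem AntiCommute.mul_left (hxz : AntiCommute x z) (hyz : Commute y z) :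
    AntiCommute (x * y) z := by
  unfold AntiCommute at *
  rw [mul_assoc, hyz.eq, ← mul_assoc, hxz, neg_mul, mul_assoc]

theorem Commute.antiCommute_mul_left (hxz : Commute x z) (hyz : AntiCommute y z) :
    AntiCommute (x * y) z := by
  unfold AntiCommute at *
  rw [mul_assoc, hyz, mul_neg, ← mul_assoc, hxz.eq, mul_assoc]

end AntiCommute

theorem AntiCommute.smul {R M : Type*} [Ring R] [CommMonoid M] [DistribMulAction M R]
    [IsScalarTower M R R] [SMulCommClass M R R] {x y : R} (hxy : AntiCommute x y)
    (r s : M) : AntiCommute (r • x) (s • y) := by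
  unfold AntiCommute at *
  rw [smul_mul_smul_comm, hxy, smul_mul_smul_comm, smul_neg, mul_comm]

section PairwiseAntiCommute

variable {R κ : Type*} [Semigroup R] [HasDistribNeg R] {φ : κ → R}

theorem commute_mul_of_ne (hφ : Pairwise fun α β => AntiCommute (φ α) (φ β)) {a c d : κ}
    (hac : a ≠ c) (had : a ≠ d) : Commute (φ a) (φ c * φ d) := by
  rw [Commute, SemiconjBy, ← mul_assoc, hφ hac, neg_mul, mul_assoc, hφ had, mul_neg, neg_neg,
    mul_assoc]

theorem antiCommute_mul_of_eq_or_eq (hφ : Pairwise fun α β => AntiCommute (φ α) (φ β))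
    {a c d : κ} (hcd : c ≠ d) (ha : a = c ∨ a = d) : AntiCommute (φ a) (φ c * φ d) := by
  unfold AntiCommute
  rcases ha with rfl | rfl
  · rw [mul_assoc (φ a) (φ d), hφ hcd.symm, mul_neg, neg_neg]
  · rw [← mul_assoc, hφ hcd.symm, neg_mul]

theorem commute_mul_mul_of_disjoint (hφ : Pairwise fun α β => AntiCommute (φ α) (φ β))
    {a b c d : κ} (ha : ¬(a = c ∨ a = d)) (hb : ¬(b = c ∨ b = d)) :
    Commute (φ a * φ b) (φ c * φ d) := by
  push Not at ha hb
  exact (commute_mul_of_ne hφ ha.1 ha.2).mul_left (commute_mul_of_ne hφ hb.1 hb.2)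

theorem antiCommute_mul_mul_of_xor (hφ : Pairwise fun α β => AntiCommute (φ α) (φ β))
    {a b c d : κ} (hcd : c ≠ d) (hab : Xor (a = c ∨ a = d) (b = c ∨ b = d)) :
    AntiCommute (φ a * φ b) (φ c * φ d) := by
  rcases hab with ⟨ha, hb⟩ | ⟨hb, ha⟩
  · exact (antiCommute_mul_of_eq_or_eq hφ hcd ha).mul_left
      (commute_mul_of_ne hφ (not_or.1 hb).1 (not_or.1 hb).2)
  · exact (commute_mul_of_ne hφ (not_or.1 ha).1 (not_or.1 ha).2).antiCommute_mul_left
      (antiCommute_mul_of_eq_or_eq hφ hcd hb)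

end PairwiseAntiCommute

theorem stmt17_general {ι : Type*} (m N : ℕ)
    (G : SimpleGraph ι)
    (S : Fin m → Finset ι) (A B : ι → Fin m)
    (hAB : ∀ j, A j ≠ B j)
    (hmem : ∀ j α, j ∈ S α ↔ (α = A j ∨ α = B j))
    (hint : ∀ α β, α ≠ β → ∀ u v, u ∈ S α → u ∈ S β → v ∈ S α → v ∈ S β → u = v)
    (hadj : ∀ j k, G.Adj j k ↔ j ≠ k ∧ ∃ α, j ∈ S α ∧ k ∈ S α)
    (φ : Fin m → Matrix (Fin N) (Fin N) ℂ)
    (hanti : ∀ α β, α ≠ β → φ α * φ β = -(φ β * φ α))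
    (ε : ι → ℂ)
    (h : ι → Matrix (Fin N) (Fin N) ℂ)
    (hdef : ∀ j, h j = (-(Complex.I) * ε j) • (φ (A j) * φ (B j))) :
    ∀ j k, (G.Adj j k → h j * h k = -(h k * h j)) ∧
      (j ≠ k → ¬G.Adj j k → h j * h k = h k * h j) := by
  have hφ : Pairwise fun α β => AntiCommute (φ α) (φ β) := fun α β => hanti α β
  have hmemA : ∀ j, j ∈ S (A j) := fun j => (hmem j _).2 (.inl rfl)
  have hmemB : ∀ j, j ∈ S (B j) := fun j => (hmem j _).2 (.inr rfl)
  intro j k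
  simp only [hdef, hadj]
  constructor
  · rintro ⟨hjk, α, hjα, hkα⟩
    have hnot_both : ¬(k ∈ S (A j) ∧ k ∈ S (B j)) := fun ⟨hkA, hkB⟩ =>
      hjk (hint _ _ (hAB j) j k (hmemA j) (hmemB j) hkA hkB)
    refine AntiCommute.smul (antiCommute_mul_mul_of_xor hφ (hAB k) ?_) _ _
    simp only [← hmem k]
    rcases (hmem j α).1 hjα with rfl | rfl <;> tauto
  · intro hjk hnadj
    have hdisj : ∀ α, j ∈ S α → ¬(α = A k ∨ α = B k) := fun α hjα hkα =>
      hnadj ⟨hjk, α, hjα, (hmem k α).2 hkα⟩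
    exact ((commute_mul_mul_of_disjoint hφ (hdisj _ (hmemA j))
      (hdisj _ (hmemB j))).smul_left _).smul_right _ |>.eq

/-- **SPSC fermionization consistency.** Let `G` be a connected finite graph on
vertex set `ι` which is an edge-disjoint union of cliques `S₁, …, S_m` (any two
cliques share at most one vertex, each vertex lies in exactly the two cliques
`A j ≠ B j`, and adjacency in `G` means sharing a clique). Let `φ₁, …, φ_m` be
pairwise anticommuting Hermitian involutions (Majorana operators, realized as
`N × N` complex matrices), and set `h j = −i ε j • (φ (A j) * φ (B j))` with
`ε j = ±1`. Then `h j` and `h k` anticommute when `j` and `k` are adjacent in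
`G`, and commute otherwise. -/
theorem stmt17 {ι : Type*} [Fintype ι] (m N : ℕ)
    (G : SimpleGraph ι) (hGconn : G.Connected)
    (S : Fin m → Finset ι) (A B : ι → Fin m)
    (hAB : ∀ j, A j ≠ B j)
    (hmem : ∀ j α, j ∈ S α ↔ (α = A j ∨ α = B j))
    (hint : ∀ α β, α ≠ β → ∀ u v, u ∈ S α → u ∈ S β → v ∈ S α → v ∈ S β → u = v)
    (hadj : ∀ j k, G.Adj j k ↔ j ≠ k ∧ ∃ α, j ∈ S α ∧ k ∈ S α)
    (φ : Fin m → Matrix (Fin N) (Fin N) ℂ)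
    (hherm : ∀ α, (φ α).conjTranspose = φ α)
    (hsq : ∀ α, φ α * φ α = 1)
    (hanti : ∀ α β, α ≠ β → φ α * φ β = -(φ β * φ α))
    (ε : ι → ℂ) (hε : ∀ j, ε j = 1 ∨ ε j = -1)
    (h : ι → Matrix (Fin N) (Fin N) ℂ)
    (hdef : ∀ j, h j = (-(Complex.I) * ε j) • (φ (A j) * φ (B j))) :
    ∀ j k, (G.Adj j k → h j * h k = -(h k * h j)) ∧
      (j ≠ k → ¬G.Adj j k → h j * h k = h k * h j) :=
  stmt17_general m N G S A B hAB hmem hint hadj φ hanti ε h hdef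
end
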